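/- arXiv:2403.20286 — 2 statements merged into one kernel-verified Lean document; each statement's English description precedes it below -/
import Mathlib

section
/- Let Z = {x ∈ ℝ⁵ : x₁² + x₂² = x₄² + x₅² and ∑_{i=1}^5 x_i² = 1} be the intersection of coaxial ellipsoids associated to the square pyramid P_{p4} (tuple 𝒜 = ((−1)², 0, (1)²) in ℝ). Then Z, with its subspace topology, is simply connected (it is path-connected and its fundamental group at every basepoint is trivial). -/
/-!
`Z` is the suspension, along the coordinate `x₂`, of the torus `x₀² + x₁² = x₃² + x₄²`.
Removing the south pole leaves a contractible set: stereographic projection from that pole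
identifies it with the cone over the torus in `ℝ⁴`, which is star-shaped. By the reflection
`x₂ ↦ -x₂` the same holds without the north pole, and the two punctured sets meet in the band
`-1 < x₂ < 1 ≅ S¹ × S¹ × (-1, 1)`, which is path-connected. A two-set van Kampen argument
then shows that `Z` is simply connected: subdivide a loop into pieces that each lie in one of
the two sets, and use the path-connected overlap to push the pieces into a single set.
-/

open Set unitInterval

section VanKampen

variable {X : Type*} [TopologicalSpace X] {U V : Set X} {x y z : X}

theorem Path.Homotopic.of_range_subset {s : Set X} (hs : IsSimplyConnected s) {p q : Path x y}
    (hp : range p ⊆ s) (hq : range q ⊆ s) : p.Homotopic q := by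
  have := hs.simplyConnectedSpace
  let lift (γ : Path x y) (hγ : range γ ⊆ s) :
      Path (⟨x, hp ⟨0, p.source⟩⟩ : s) ⟨y, hp ⟨1, p.target⟩⟩ :=
    { toFun t := ⟨γ t, hγ ⟨t, rfl⟩⟩
      source' := by simp
      target' := by simp }
  exact (SimplyConnectedSpace.paths_homotopic (lift p hp) (lift q hq)).map
    ⟨Subtype.val, continuous_subtype_val⟩

def Path.HomotopicToTrans (S T : Set X) (γ : Path x y) : Prop :=
  ∃ (z : X) (p : Path x z) (q : Path z y), range p ⊆ S ∧ range q ⊆ T ∧ γ.Homotopic (p.trans q)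

namespace Path.HomotopicToTrans

variable {S T : Set X}

theorem trans_right {γ : Path x y} (h : γ.HomotopicToTrans S T) {r : Path y z}
    (hr : range r ⊆ T) : (γ.trans r).HomotopicToTrans S T := by
  obtain ⟨w, p, q, hp, hq, hγ⟩ := h
  refine ⟨w, p, q.trans r, hp, trans_range q r ▸ union_subset hq hr, ?_⟩
  exact (hγ.hcomp (.refl r)).trans ⟨.transAssoc p q r⟩

theorem of_homotopic {γ p : Path x y} (hγ : γ.Homotopic p) (hp : range p ⊆ S) (hy : y ∈ T) :
    γ.HomotopicToTrans S T :=
  ⟨y, p, .refl y, hp, by simpa using hy, hγ.trans ⟨(Homotopy.transRefl p).symm⟩⟩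

theorem exists_homotopic {γ : Path x y} (h : γ.HomotopicToTrans S T)
    (hT : IsSimplyConnected T) (hST : IsPathConnected (S ∩ T)) (hy : y ∈ S) :
    ∃ p : Path x y, range p ⊆ S ∧ γ.Homotopic p := by
  obtain ⟨w, p, q, hp, hq, hγ⟩ := h
  have hwS : w ∈ S := hp ⟨1, p.target⟩
  have hwT : w ∈ T := hq ⟨0, q.source⟩
  have hyT : y ∈ T := hq ⟨1, q.target⟩
  obtain ⟨r, hr⟩ := hST.joinedIn w ⟨hwS, hwT⟩ y ⟨hy, hyT⟩
  have hrST : range r ⊆ S ∩ T := range_subset_iff.2 hr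
  refine ⟨p.trans r, trans_range p r ▸ union_subset hp (hrST.trans inter_subset_left), ?_⟩
  exact hγ.trans ((Homotopic.refl p).hcomp
    (.of_range_subset hT hq (hrST.trans inter_subset_right)))

end Path.HomotopicToTrans

-- The invariant that the van Kampen argument propagates along a subdivision of a path.
def Path.ReducibleInto (U V : Set X) (γ : Path x y) : Prop :=
  (y ∈ U → ∃ p : Path x y, range p ⊆ U ∧ γ.Homotopic p) ∧ (y ∈ V → γ.HomotopicToTrans U V)

namespace Path.ReducibleInto

theorem refl (hx : x ∈ U) : (Path.refl x).ReducibleInto U V :=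
  ⟨fun _ ↦ ⟨.refl x, by simpa using hx, .refl _⟩,
    fun hx' ↦ .of_homotopic (.refl _) (by simpa using hx) hx'⟩

theorem of_homotopic {γ γ' : Path x y} (h : γ.ReducibleInto U V) (hγ : γ'.Homotopic γ) :
    γ'.ReducibleInto U V := by
  refine ⟨fun hy ↦ ?_, fun hy ↦ ?_⟩
  · obtain ⟨p, hp, hγp⟩ := h.1 hy
    exact ⟨p, hp, hγ.trans hγp⟩
  · obtain ⟨w, p, q, hp, hq, hγpq⟩ := h.2 hy
    exact ⟨w, p, q, hp, hq, hγ.trans hγpq⟩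

theorem cast_iff {x' y' : X} {γ : Path x y} (hx : x' = x) (hy : y' = y) :
    (γ.cast hx hy).ReducibleInto U V ↔ γ.ReducibleInto U V := by
  subst hx hy
  rfl

theorem trans {γ : Path x y} (h : γ.ReducibleInto U V) (hV : IsSimplyConnected V)
    (hUV : IsPathConnected (U ∩ V)) {r : Path y z} (hr : range r ⊆ U ∨ range r ⊆ V) :
    (γ.trans r).ReducibleInto U V := by
  rcases hr with hrU | hrV
  · obtain ⟨p, hp, hγp⟩ := h.1 (hrU ⟨0, r.source⟩)
    have hpr : range (p.trans r) ⊆ U := trans_range p r ▸ union_subset hp hrU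
    have hγr := hγp.hcomp (.refl r)
    exact ⟨fun _ ↦ ⟨p.trans r, hpr, hγr⟩, fun hz ↦ .of_homotopic hγr hpr hz⟩
  · have hγr := (h.2 (hrV ⟨0, r.source⟩)).trans_right hrV
    exact ⟨fun hz ↦ hγr.exists_homotopic hV hUV hz, fun _ ↦ hγr⟩

end Path.ReducibleInto

theorem Path.reducibleInto_of_isOpen_cover (hU : IsOpen U) (hV : IsOpen V) (hcov : U ∪ V = univ)
    (hVs : IsSimplyConnected V) (hUV : IsPathConnected (U ∩ V)) (γ : Path x y) (hx : x ∈ U) :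
    γ.ReducibleInto U V := by
  let c : Bool → Set I := fun b ↦ γ ⁻¹' cond b U V
  have hc : univ ⊆ ⋃ b, c b := fun t _ ↦ by
    rcases (hcov ▸ mem_univ (γ t) : γ t ∈ U ∪ V) with h | h
    exacts [mem_iUnion.2 ⟨true, h⟩, mem_iUnion.2 ⟨false, h⟩]
  obtain ⟨t, ht0, htm, ⟨N, htN⟩, hpiece⟩ := exists_monotone_Icc_subset_open_cover_unitInterval
    (fun b ↦ (by cases b <;> assumption : IsOpen (cond b U V)).preimage γ.continuous) hc
  have key : ∀ n, (γ.subpath 0 (t n)).ReducibleInto U V := by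
    intro n
    induction n with
    | zero => rw [ht0, subpath_self]; exact .refl (by simpa using hx)
    | succ n ih =>
      obtain ⟨b, hb⟩ := hpiece n
      have hr : range (γ.subpath (t n) (t (n + 1))) ⊆ cond b U V := by
        rw [range_subpath_of_le _ _ _ (htm n.le_succ)]
        exact image_subset_iff.2 hb
      exact (ih.trans hVs hUV (by cases b; exacts [.inr hr, .inl hr])).of_homotopic
        ⟨(Homotopy.subpathTransSubpath γ 0 (t n) (t (n + 1))).symm⟩
  have := key N
  rwa [htN N le_rfl, subpath_zero_one, ReducibleInto.cast_iff] at this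

theorem Path.homotopic_refl_of_isOpen_cover (hU : IsOpen U) (hV : IsOpen V)
    (hcov : U ∪ V = univ) (hUs : IsSimplyConnected U) (hVs : IsSimplyConnected V)
    (hUV : IsPathConnected (U ∩ V)) (γ : Path x x) (hx : x ∈ U) : γ.Homotopic (.refl x) := by
  obtain ⟨p, hp, hγp⟩ := (γ.reducibleInto_of_isOpen_cover hU hV hcov hVs hUV hx).1 hx
  exact hγp.trans (.of_range_subset hUs hp (by simpa using hx))

theorem simplyConnectedSpace_of_isOpen_cover (hU : IsOpen U) (hV : IsOpen V)
    (hcov : U ∪ V = univ) (hUs : IsSimplyConnected U) (hVs : IsSimplyConnected V)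
    (hUV : IsPathConnected (U ∩ V)) : SimplyConnectedSpace X := by
  rw [simply_connected_iff_loops_nullhomotopic]
  refine ⟨?_, fun x γ ↦ ?_⟩
  · rw [pathConnectedSpace_iff_univ, ← hcov]
    exact hUs.isPathConnected.union hVs.isPathConnected hUV.nonempty
  · rcases (hcov ▸ mem_univ x : x ∈ U ∪ V) with hx | hx
    · exact γ.homotopic_refl_of_isOpen_cover hU hV hcov hUs hVs hUV hx
    · rw [union_comm] at hcov
      rw [inter_comm] at hUV
      exact γ.homotopic_refl_of_isOpen_cover hV hU hcov hVs hUs hUV hx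

end VanKampen

theorem Circle.exists_mul_re_im {a b r : ℝ} (hr : 0 < r) (h : a ^ 2 + b ^ 2 = r ^ 2) :
    ∃ u : Circle, r * (u : ℂ).re = a ∧ r * (u : ℂ).im = b := by
  refine ⟨⟨⟨a / r, b / r⟩, ?_⟩, by field_simp, by field_simp⟩
  rw [Submonoid.unitSphere, Submonoid.mem_mk, Subsemigroup.mem_mk, mem_sphere_zero_iff_norm,
    Complex.norm_def, Complex.normSq_mk, Real.sqrt_eq_one]
  field_simp
  linear_combination h

theorem Circle.re_sq_add_im_sq (u : Circle) : (u : ℂ).re ^ 2 + (u : ℂ).im ^ 2 = 1 := by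
  simpa [Complex.normSq_apply, sq] using u.normSq_coe

abbrev TorusSuspension : Type :=
  {x : Fin 5 → ℝ // x 0 ^ 2 + x 1 ^ 2 = x 3 ^ 2 + x 4 ^ 2 ∧ ∑ i, x i ^ 2 = 1}

namespace TorusSuspension

theorem sq_two_le_one (x : TorusSuspension) : x.1 2 ^ 2 ≤ 1 := by
  have h := x.2.2
  rw [Fin.sum_univ_five] at h
  nlinarith [sq_nonneg (x.1 0), sq_nonneg (x.1 1), sq_nonneg (x.1 3), sq_nonneg (x.1 4)]

def reflect : TorusSuspension ≃ₜ TorusSuspension :=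
  (Homeomorph.piCongrRight fun i : Fin 5 ↦
    if i = 2 then Homeomorph.neg ℝ else Homeomorph.refl ℝ).subtype fun x ↦ by
      simp [Fin.sum_univ_five]

@[simp] theorem reflect_apply_two (x : TorusSuspension) : (reflect x).1 2 = -x.1 2 := by
  simp [reflect]

def offSouthPole : Set TorusSuspension := {x | -1 < x.1 2}

theorem isOpen_offSouthPole : IsOpen offSouthPole :=
  isOpen_lt continuous_const ((continuous_apply 2).comp continuous_subtype_val)

theorem offSouthPole_union_reflect : offSouthPole ∪ reflect ⁻¹' offSouthPole = univ := by
  refine eq_univ_of_forall fun x ↦ ?_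
  simp only [offSouthPole, mem_union, mem_ofPred, mem_preimage, reflect_apply_two]
  by_contra! h
  nlinarith [x.sq_two_le_one]

-- Stereographic projection from the south pole, the radial contraction `y ↦ (1 - s) y` of the
-- cone over the torus, and the inverse projection, composed and simplified.
noncomputable def pullNorth (s : ℝ) (x : Fin 5 → ℝ) : Fin 5 → ℝ := fun i ↦
  if i = 2 then (1 + x 2 - (1 - s) ^ 2 * (1 - x 2)) / (1 + x 2 + (1 - s) ^ 2 * (1 - x 2))
  else 2 * (1 - s) * x i / (1 + x 2 + (1 - s) ^ 2 * (1 - x 2))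

theorem pullNorth_denom_pos (s : ℝ) {x : TorusSuspension} (hx : x ∈ offSouthPole) :
    0 < 1 + x.1 2 + (1 - s) ^ 2 * (1 - x.1 2) := by
  have : x.1 2 ≤ 1 := by nlinarith [x.sq_two_le_one]
  nlinarith [sq_nonneg (1 - s), hx.out]

theorem pullNorth_mem (s : ℝ) {x : TorusSuspension} (hx : x ∈ offSouthPole) :
    (pullNorth s x.1 0 ^ 2 + pullNorth s x.1 1 ^ 2 =
      pullNorth s x.1 3 ^ 2 + pullNorth s x.1 4 ^ 2 ∧ ∑ i, pullNorth s x.1 i ^ 2 = 1) ∧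
    -1 < pullNorth s x.1 2 := by
  have hE := pullNorth_denom_pos s hx
  obtain ⟨x, hcone, hsum⟩ := x
  dsimp only at hE ⊢
  replace hx : -1 < x 2 := hx
  rw [Fin.sum_univ_five] at hsum ⊢
  simp only [pullNorth, Fin.reduceEq, if_true, if_false, div_pow, mul_pow]
  refine ⟨⟨?_, ?_⟩, ?_⟩
  · rw [← add_div, ← add_div, ← mul_add, ← mul_add, hcone]
  · field_simp
    linear_combination (4 * (1 - s) ^ 2) * hsum
  · rw [lt_div_iff₀ hE]
    nlinarith

theorem continuous_pullNorth :
    Continuous fun p : I × offSouthPole ↦ pullNorth p.1 p.2.1.1 := by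
  have hs : Continuous fun p : I × offSouthPole ↦ (p.1 : ℝ) := by fun_prop
  have hx : ∀ i, Continuous fun p : I × offSouthPole ↦ p.2.1.1 i := fun i ↦
    (continuous_apply i).comp
      (continuous_subtype_val.comp (continuous_subtype_val.comp continuous_snd))
  have hE : ∀ p : I × offSouthPole, 1 + p.2.1.1 2 + (1 - p.1) ^ 2 * (1 - p.2.1.1 2) ≠ 0 :=
    fun p ↦ (pullNorth_denom_pos p.1 p.2.2).ne'
  refine continuous_pi fun i ↦ ?_
  have hxi := hx i
  have hx2 := hx 2
  unfold pullNorth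
  split_ifs
  · exact Continuous.div (by fun_prop) (by fun_prop) hE
  · exact Continuous.div (by fun_prop) (by fun_prop) hE

theorem pullNorth_zero (x : Fin 5 → ℝ) : pullNorth 0 x = x := by
  ext i
  simp only [pullNorth]
  split_ifs with h
  · subst h; ring
  · ring

theorem pullNorth_one {x : TorusSuspension} (hx : x ∈ offSouthPole) :
    pullNorth 1 x.1 = ![0, 0, 1, 0, 0] := by
  have hE : 1 + x.1 2 ≠ 0 := by linarith [hx.out]
  ext i
  fin_cases i <;> simp [pullNorth, hE]

noncomputable def radius (h : ℝ) : ℝ := √((1 - h ^ 2) / 2)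

theorem radius_sq {h : ℝ} (hh : h ∈ Ioo (-1) 1) : radius h ^ 2 = (1 - h ^ 2) / 2 :=
  Real.sq_sqrt (by nlinarith [hh.1, hh.2])

noncomputable def band (p : Circle × Circle × Ioo (-1 : ℝ) 1) : TorusSuspension :=
  ⟨![radius p.2.2 * (p.1 : ℂ).re, radius p.2.2 * (p.1 : ℂ).im, p.2.2,
      radius p.2.2 * (p.2.1 : ℂ).re, radius p.2.2 * (p.2.1 : ℂ).im], by
    have hr := radius_sq p.2.2.2
    have hu := p.1.re_sq_add_im_sq
    have hv := p.2.1.re_sq_add_im_sq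
    simp only [Fin.sum_univ_five, Matrix.cons_val, mul_pow]
    constructor
    · linear_combination (radius p.2.2 ^ 2) * (hu - hv)
    · linear_combination (radius p.2.2 ^ 2) * (hu + hv) + 2 * hr⟩

theorem continuous_band : Continuous band := by
  refine Continuous.subtype_mk (continuous_pi fun i ↦ ?_) _
  have : Continuous radius := by unfold radius; fun_prop
  fin_cases i <;> dsimp [band] <;> fun_prop

theorem range_band : range band = offSouthPole ∩ reflect ⁻¹' offSouthPole := by
  ext x
  constructor
  · rintro ⟨⟨u, v, h, hh⟩, rfl⟩
    exact ⟨hh.1, by simpa [offSouthPole, band] using hh.2⟩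
  · rintro ⟨hx₁, hx₂⟩
    replace hx₂ : x.1 2 < 1 := by simpa [offSouthPole] using hx₂
    have hh : x.1 2 ∈ Ioo (-1) 1 := ⟨hx₁, hx₂⟩
    have hsum := x.2.2
    rw [Fin.sum_univ_five] at hsum
    have hr : radius (x.1 2) ^ 2 = x.1 0 ^ 2 + x.1 1 ^ 2 := by
      rw [radius_sq hh]; linear_combination -hsum / 2 - x.2.1 / 2
    have hr₀ : 0 < radius (x.1 2) := Real.sqrt_pos.2 (by nlinarith [hh.1, hh.2])
    obtain ⟨u, hu⟩ := Circle.exists_mul_re_im hr₀ hr.symm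
    obtain ⟨v, hv⟩ := Circle.exists_mul_re_im hr₀ (x.2.1 ▸ hr).symm
    refine ⟨(u, v, ⟨_, hh⟩), Subtype.ext (funext fun i ↦ ?_)⟩
    fin_cases i <;> simp [band, hu, hv]

theorem contractibleSpace_offSouthPole : ContractibleSpace offSouthPole := by
  rw [contractible_iff_id_nullhomotopic]
  refine ⟨⟨⟨![0, 0, 1, 0, 0], by simp [Fin.sum_univ_five]⟩, show (-1 : ℝ) < 1 by norm_num⟩, ⟨?_⟩⟩
  exact
    { toFun p := ⟨⟨pullNorth p.1 p.2.1.1, (pullNorth_mem p.1 p.2.2).1⟩, (pullNorth_mem p.1 p.2.2).2⟩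
      continuous_toFun := (continuous_pullNorth.subtype_mk _).subtype_mk _
      map_zero_left x := Subtype.ext (Subtype.ext (pullNorth_zero _))
      map_one_left x := Subtype.ext (Subtype.ext (pullNorth_one x.2)) }

theorem isSimplyConnected_offSouthPole : IsSimplyConnected offSouthPole :=
  have := contractibleSpace_offSouthPole
  SimplyConnectedSpace.ofContractible _

theorem isPathConnected_offSouthPole_inter_reflect :
    IsPathConnected (offSouthPole ∩ reflect ⁻¹' offSouthPole) := by
  have : PathConnectedSpace (Ioo (-1 : ℝ) 1) :=
    isPathConnected_iff_pathConnectedSpace.1 ((convex_Ioo _ _).isPathConnected ⟨0, by norm_num⟩)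
  exact range_band ▸ isPathConnected_range continuous_band

instance : SimplyConnectedSpace TorusSuspension :=
  simplyConnectedSpace_of_isOpen_cover isOpen_offSouthPole
    (isOpen_offSouthPole.preimage reflect.continuous) offSouthPole_union_reflect
    isSimplyConnected_offSouthPole
    (reflect.isSimplyConnected_preimage.2 isSimplyConnected_offSouthPole)
    isPathConnected_offSouthPole_inter_reflect

end TorusSuspension

/-- The intersection `Z = {x ∈ ℝ⁵ : x₁² + x₂² = x₄² + x₅², ∑ xᵢ² = 1}` associated to the
square pyramid (the suspension of the torus) is simply connected: it is path-connected
and its fundamental group at every basepoint is trivial. -/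
theorem stmt_11 :
    PathConnectedSpace {x : Fin 5 → ℝ //
        x 0 ^ 2 + x 1 ^ 2 = x 3 ^ 2 + x 4 ^ 2 ∧ ∑ i, x i ^ 2 = 1} ∧
      ∀ z : {x : Fin 5 → ℝ //
          x 0 ^ 2 + x 1 ^ 2 = x 3 ^ 2 + x 4 ^ 2 ∧ ∑ i, x i ^ 2 = 1},
        Subsingleton (FundamentalGroup {x : Fin 5 → ℝ //
          x 0 ^ 2 + x 1 ^ 2 = x 3 ^ 2 + x 4 ^ 2 ∧ ∑ i, x i ^ 2 = 1} z) :=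
  ⟨inferInstance, fun _ ↦ inferInstance⟩
end

section
/- Let Z = {x ∈ ℝ⁵ : x₁² + x₂² = x₄² + x₅² and ∑_{i=1}^5 x_i² = 1} be the intersection of coaxial ellipsoids associated to the square pyramid P_{p4}, and let Ž = Z ∖ {(0,0,1,0,0), (0,0,−1,0,0)} be its smooth part, obtained by removing its two singular points. Then Ž, with its subspace topology, is homeomorphic to (S¹ × S¹) × (−1, 1), where S¹ is the unit circle in ℝ². -/
/-!
Away from the two poles the height `x₂` lies in `(-1, 1)`, and the two equations force
`‖(x₀, x₁)‖ = ‖(x₃, x₄)‖ = √((1 - x₂²) / 2) > 0`. Dividing both pairs by this common radius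
identifies the smooth part with `(S¹ × S¹) × (-1, 1)`.
-/

open Set Metric

section ScaledSpheres

variable {E F T : Type*} [NormedAddCommGroup E] [NormedSpace ℝ E]
  [NormedAddCommGroup F] [NormedSpace ℝ F] [TopologicalSpace T]

def scaledSpheres (r : T → ℝ) (U : Set T) : Set ((E × F) × T) :=
  {p | p.2 ∈ U ∧ ‖p.1.1‖ = r p.2 ∧ ‖p.1.2‖ = r p.2}

lemma inv_smul_mem_sphere_one {a : E} {c : ℝ} (hc : 0 < c) (ha : ‖a‖ = c) :
    c⁻¹ • a ∈ sphere (0 : E) 1 := by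
  rw [mem_sphere_zero_iff_norm, norm_smul, ha, norm_inv, Real.norm_of_nonneg hc.le,
    inv_mul_cancel₀ hc.ne']

lemma norm_smul_of_mem_sphere_one {u : E} (hu : u ∈ sphere (0 : E) 1) {c : ℝ} (hc : 0 ≤ c) :
    ‖c • u‖ = c := by
  rw [norm_smul, mem_sphere_zero_iff_norm.1 hu, mul_one, Real.norm_of_nonneg hc]

noncomputable def scaledSpheresHomeomorph {r : T → ℝ} (hr : Continuous r) {U : Set T}
    (hU : ∀ t ∈ U, 0 < r t) :
    scaledSpheres (E := E) (F := F) r U ≃ₜ (sphere (0 : E) 1 × sphere (0 : F) 1) × U where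
  toFun p := ((⟨(r p.1.2)⁻¹ • p.1.1.1, inv_smul_mem_sphere_one (hU _ p.2.1) p.2.2.1⟩,
      ⟨(r p.1.2)⁻¹ • p.1.1.2, inv_smul_mem_sphere_one (hU _ p.2.1) p.2.2.2⟩), ⟨p.1.2, p.2.1⟩)
  invFun q := ⟨((r q.2 • q.1.1.1, r q.2 • q.1.2.1), q.2), q.2.2,
      norm_smul_of_mem_sphere_one q.1.1.2 (hU _ q.2.2).le,
      norm_smul_of_mem_sphere_one q.1.2.2 (hU _ q.2.2).le⟩
  left_inv p := by
    have := (hU _ p.2.1).ne'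
    ext <;> simp [smul_smul, this]
  right_inv q := by
    have := (hU _ q.2.2).ne'
    ext <;> simp [smul_smul, this]
  continuous_toFun := by
    have hr' : Continuous fun p : scaledSpheres (E := E) (F := F) r U => (r p.1.2)⁻¹ :=
      (hr.comp (by fun_prop)).inv₀ fun p => (hU _ p.2.1).ne'
    fun_prop
  continuous_invFun := by fun_prop

end ScaledSpheres

noncomputable def splitFin5 :
    (Fin 5 → ℝ) ≃ₜ (EuclideanSpace ℝ (Fin 2) × EuclideanSpace ℝ (Fin 2)) × ℝ where
  toFun x := ((!₂[x 0, x 1], !₂[x 3, x 4]), x 2)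
  invFun p := ![p.1.1 0, p.1.1 1, p.2, p.1.2 0, p.1.2 1]
  left_inv x := by ext i; fin_cases i <;> rfl
  right_inv p := by ext i <;> first | rfl | fin_cases i <;> rfl
  continuous_toFun := by fun_prop
  continuous_invFun := by fun_prop

lemma EuclideanSpace.norm_fin_two_eq_sqrt_iff {u : EuclideanSpace ℝ (Fin 2)} {c : ℝ}
    (hc : 0 ≤ c) : ‖u‖ = √c ↔ u 0 ^ 2 + u 1 ^ 2 = c := by
  rw [← Fin.sum_univ_two (fun i => u i ^ 2), ← EuclideanSpace.real_norm_sq_eq, eq_comm,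
    Real.sqrt_eq_iff_eq_sq hc (norm_nonneg u), eq_comm]

lemma mem_smoothPart_iff {x : Fin 5 → ℝ} :
    x ∈ {x : Fin 5 → ℝ | x 0 ^ 2 + x 1 ^ 2 = x 3 ^ 2 + x 4 ^ 2 ∧ ∑ i, x i ^ 2 = 1} \
        {![0, 0, 1, 0, 0], ![0, 0, -1, 0, 0]} ↔
      x 2 ∈ Ioo (-1) 1 ∧ x 0 ^ 2 + x 1 ^ 2 = (1 - x 2 ^ 2) / 2 ∧
        x 3 ^ 2 + x 4 ^ 2 = (1 - x 2 ^ 2) / 2 := by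
  simp only [mem_sdiff, mem_ofPred_eq, Fin.sum_univ_five, mem_insert_iff, mem_singleton_iff,
    mem_Ioo, not_or]
  constructor
  · rintro ⟨⟨hab, hsum⟩, hN, hS⟩
    refine ⟨?_, by linarith, by linarith⟩
    by_contra hpole
    have h2 : 1 ≤ x 2 ^ 2 := by
      rcases not_and_or.1 hpole with h | h <;> rw [not_lt] at h <;> nlinarith
    have h0 : x 0 = 0 := by nlinarith [sq_nonneg (x 0), sq_nonneg (x 1)]
    have h1 : x 1 = 0 := by nlinarith [sq_nonneg (x 0), sq_nonneg (x 1)]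
    have h3 : x 3 = 0 := by nlinarith [sq_nonneg (x 3), sq_nonneg (x 4)]
    have h4 : x 4 = 0 := by nlinarith [sq_nonneg (x 3), sq_nonneg (x 4)]
    rcases sq_eq_one_iff.1 (show x 2 ^ 2 = 1 by nlinarith) with h | h
    · exact hN (funext fun i => by fin_cases i <;> simp [*])
    · exact hS (funext fun i => by fin_cases i <;> simp [*])
  · rintro ⟨⟨hlo, hhi⟩, ha, hb⟩
    refine ⟨⟨by linarith, by linarith⟩, fun h => ?_, fun h => ?_⟩ <;>
    · have := congrFun h 2
      simp at this
      linarith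

lemma smoothPart_eq_preimage_scaledSpheres :
    {x : Fin 5 → ℝ | x 0 ^ 2 + x 1 ^ 2 = x 3 ^ 2 + x 4 ^ 2 ∧ ∑ i, x i ^ 2 = 1} \
        {![0, 0, 1, 0, 0], ![0, 0, -1, 0, 0]} =
      splitFin5 ⁻¹' scaledSpheres (fun t => √((1 - t ^ 2) / 2)) (Ioo (-1) 1) := by
  ext x
  rw [mem_smoothPart_iff]
  refine and_congr_right fun ht => ?_
  have hr : 0 ≤ (1 - x 2 ^ 2) / 2 := by nlinarith [ht.1, ht.2]
  exact (and_congr (EuclideanSpace.norm_fin_two_eq_sqrt_iff (u := !₂[x 0, x 1]) hr)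
    (EuclideanSpace.norm_fin_two_eq_sqrt_iff (u := !₂[x 3, x 4]) hr)).symm

/-- The smooth part of the intersection associated to the square pyramid — the suspension
of the torus minus its two singular points `(0,0,±1,0,0)` — is homeomorphic to
`(S¹ × S¹) × (−1, 1)`. -/
theorem stmt_12
    (Z : Set (Fin 5 → ℝ))
    (hZ : Z = {x | x 0 ^ 2 + x 1 ^ 2 = x 3 ^ 2 + x 4 ^ 2 ∧ ∑ i, x i ^ 2 = 1})
    (Zsm : Set (Fin 5 → ℝ))
    (hZsm : Zsm = Z \ {![0, 0, 1, 0, 0], ![0, 0, -1, 0, 0]}) :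
    Nonempty (Zsm ≃ₜ
      ((Metric.sphere (0 : EuclideanSpace ℝ (Fin 2)) 1 ×
          Metric.sphere (0 : EuclideanSpace ℝ (Fin 2)) 1) ×
        Set.Ioo (-1 : ℝ) 1)) := by
  subst hZsm hZ
  have hr : ∀ t ∈ Ioo (-1 : ℝ) 1, 0 < √((1 - t ^ 2) / 2) := fun t ht =>
    Real.sqrt_pos.2 (by nlinarith [ht.1, ht.2])
  exact ⟨(splitFin5.sets smoothPart_eq_preimage_scaledSpheres).trans
    (scaledSpheresHomeomorph (by fun_prop) hr)⟩
end
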